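/- For n ≥ 3, a permutation of {1,...,n} lies in the images of two distinct maps among f_before, f_after, f_end, f_bump (applied to B-avoiding permutations of {1,...,n-1}) if and only if its last two values are {1,2} (in either order); moreover no permutation lies in the images of both f_before and f_after, nor of both f_end and f_bump. -/

import Mathlib

/-- `l` is a permutation of `{1, ..., n}`, viewed as the sequence of its values. -/
def IsPermOf (l : List ℕ) (n : ℕ) : Prop := l.Perm (List.range' 1 n)

/-- `l` is B-avoiding: there are no indices `a < b < c < d` with
`max {l a, l c} < min {l b, l d}`. -/
def BAvoid (l : List ℕ) : Prop :=
  ∀ a b c d : Fin l.length, a < b → b < c → c < d →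
    ¬ (max (l.get a) (l.get c) < min (l.get b) (l.get d))

/-- increase all values by 1 and insert `1` immediately before the value `2`. -/
def fBefore (σ : List ℕ) : List ℕ :=
  ((σ.map (· + 1)).take ((σ.map (· + 1)).idxOf 2)) ++
    1 :: ((σ.map (· + 1)).drop ((σ.map (· + 1)).idxOf 2))

/-- increase all values by 1 and insert `1` immediately after the value `2`. -/
def fAfter (σ : List ℕ) : List ℕ :=
  ((σ.map (· + 1)).take ((σ.map (· + 1)).idxOf 2 + 1)) ++
    1 :: ((σ.map (· + 1)).drop ((σ.map (· + 1)).idxOf 2 + 1))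

/-- increase all values by 1 and append `1` at the end. -/
def fEnd (σ : List ℕ) : List ℕ := σ.map (· + 1) ++ [1]

/-- increase all values by 1, replace the value `2` by `1`, and append `2` at the end. -/
def fBump (σ : List ℕ) : List ℕ :=
  (σ.map (· + 1)).map (fun x => if x = 2 then 1 else x) ++ [2]

/-- `π` lies in the image of the `i`-th of the four maps applied to
B-avoiding permutations of `{1, ..., n-1}`. -/
def InImage (n : ℕ) (i : Fin 4) (π : List ℕ) : Prop :=
  ∃ σ : List ℕ, IsPermOf σ (n - 1) ∧ BAvoid σ ∧ ![fBefore, fAfter, fEnd, fBump] i σ = π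

/-!
Each of the four maps leaves a recognisable trace on the positions of the values `1` and `2`:
`f_before` puts `1` immediately before `2`, `f_after` puts `2` immediately before `1`, `f_end`
ends with `1` and `f_bump` ends with `2`. In a permutation two of these traces are compatible only
for the pairs `(f_before, f_bump)`, forcing the ending `1, 2`, and `(f_after, f_end)`, forcing the
ending `2, 1`. Conversely, deleting `1` from a B-avoiding permutation ending in `1, 2` or `2, 1`
and lowering the remaining values by one gives a preimage under both maps of the pair; it is
B-avoiding because avoidance passes to subsequences and to order-preserving relabellings.
-/

namespace List

theorem exists_eq_append_pair_of_idxOf {α : Type*} [DecidableEq α] {l : List α} {x y : α}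
    (hpx : l.idxOf x + 2 = l.length) (hpy : l.idxOf y + 1 = l.length) :
    ∃ A, l = A ++ [x, y] := by
  have hgx : l[l.length - 2] = x := by simp [← hpx]
  have hgy : l[l.length - 1] = y := by simp [← hpy]
  refine ⟨l.take (l.length - 2), ?_⟩
  conv_lhs => rw [← take_append_drop (l.length - 2) l]
  rw [drop_eq_getElem_cons (by omega), drop_eq_getElem_cons (by omega),
    drop_of_length_le (by omega)]
  simp only [hgx, show l.length - 2 + 1 = l.length - 1 by omega, hgy]

theorem range'_one_erase_one (n : ℕ) : (range' 1 n).erase 1 = range' 2 (n - 1) := by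
  cases n <;> simp [range'_succ]

end List

theorem IsPermOf.nodup {l : List ℕ} {n : ℕ} (h : IsPermOf l n) : l.Nodup :=
  h.nodup_iff.2 List.nodup_range'

theorem IsPermOf.mem {l : List ℕ} {n k : ℕ} (h : IsPermOf l n) (hk : 1 ≤ k) (hkn : k ≤ n) :
    k ∈ l :=
  h.mem_iff.2 (List.mem_range'_1.2 ⟨hk, by omega⟩)

theorem BAvoid.sublist {l l' : List ℕ} (h : BAvoid l) (hl : l'.Sublist l) : BAvoid l' := by
  obtain ⟨f, hf⟩ := List.sublist_iff_exists_fin_orderEmbedding_get_eq.1 hl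
  intro a b c d hab hbc hcd
  simpa only [hf] using
    h (f a) (f b) (f c) (f d) (f.lt_iff_lt.2 hab) (f.lt_iff_lt.2 hbc) (f.lt_iff_lt.2 hcd)

theorem BAvoid.map {l : List ℕ} {f : ℕ → ℕ} (h : BAvoid l) (hf : StrictMonoOn f {x | x ∈ l}) :
    BAvoid (l.map f) := by
  intro a b c d hab hbc hcd
  have hmem (i : Fin (l.map f).length) : l[i.1]'(by simpa using i.2) ∈ {x | x ∈ l} :=
    List.getElem_mem _
  have hviol := h (a.cast (List.length_map f)) (b.cast (List.length_map f))
    (c.cast (List.length_map f)) (d.cast (List.length_map f)) hab hbc hcd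
  simpa only [List.get_eq_getElem, List.getElem_map, Fin.val_cast, lt_min_iff, max_lt_iff,
    hf.lt_iff_lt (hmem _) (hmem _)] using hviol

theorem exists_bAvoid_map_succ_eq_erase_one {π : List ℕ} {n : ℕ} (hπ : IsPermOf π n)
    (hB : BAvoid π) :
    ∃ σ, IsPermOf σ (n - 1) ∧ BAvoid σ ∧ σ.map (· + 1) = π.erase 1 := by
  have hge : ∀ x ∈ π.erase 1, 2 ≤ x := fun x hx => by
    obtain ⟨hx1, hxπ⟩ := hπ.nodup.mem_erase_iff.1 hx
    have := (List.mem_range'_1.1 (hπ.mem_iff.1 hxπ)).1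
    omega
  refine ⟨(π.erase 1).map (· - 1), ?_, ?_, ?_⟩
  · have := (hπ.erase 1).map (· - 1)
    rwa [List.range'_one_erase_one, List.map_sub_range' (by omega)] at this
  · refine (hB.sublist (List.erase_sublist)).map fun x hx y hy hxy => ?_
    have := hge x hx
    omega
  · rw [List.map_map]
    conv_rhs => rw [← List.map_id (π.erase 1)]
    exact List.map_congr_left fun x hx => by have := hge x hx; simp; omega

theorem fBefore_eq_of_map_succ_eq {σ A B : List ℕ} (h : σ.map (· + 1) = A ++ 2 :: B)
    (hA : 2 ∉ A) : fBefore σ = A ++ 1 :: 2 :: B := by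
  rw [fBefore, h, List.idxOf_append_of_notMem hA, List.idxOf_cons_self, add_zero,
    List.take_left, List.drop_left]

theorem fAfter_eq_of_map_succ_eq {σ A B : List ℕ} (h : σ.map (· + 1) = A ++ 2 :: B)
    (hA : 2 ∉ A) : fAfter σ = A ++ 2 :: 1 :: B := by
  rw [fAfter, h, List.idxOf_append_of_notMem hA, List.idxOf_cons_self, add_zero,
    List.append_cons A 2 B, List.take_left' (by simp), List.drop_left' (by simp)]
  simp

theorem fBump_eq_of_map_succ_eq {σ A : List ℕ} (h : σ.map (· + 1) = A ++ [2]) (hA : 2 ∉ A) :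
    fBump σ = A ++ [1, 2] := by
  rw [fBump, h, List.map_append, List.map_congr_left (l := A) (g := id) fun x hx => by
    simp [show x ≠ 2 from fun h => hA (h ▸ hx)]]
  simp

theorem exists_map_succ_eq_append_two {σ : List ℕ} {n : ℕ} (hn : 2 ≤ n)
    (hσ : IsPermOf σ (n - 1)) : ∃ A B, σ.map (· + 1) = A ++ 2 :: B ∧ 2 ∉ A := by
  obtain ⟨A, B, hAB⟩ :=
    List.append_of_mem (List.mem_map_of_mem (f := (· + 1)) (hσ.mem le_rfl (by omega)))
  have hnd := hAB ▸ hσ.nodup.map (add_left_injective 1)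
  exact ⟨A, B, hAB, fun h => List.disjoint_of_nodup_append hnd h List.mem_cons_self⟩

/-- Entry `i` is the constraint the `i`-th map imposes on the positions `p₁`, `p₂` of the values
`1`, `2` in a permutation of length `L`. -/
def ImagePositions (p₁ p₂ L : ℕ) : Fin 4 → Prop :=
  ![p₂ = p₁ + 1, p₁ = p₂ + 1, p₁ + 1 = L, p₂ + 1 = L]

theorem InImage.imagePositions {n : ℕ} {i : Fin 4} {π : List ℕ} (hn : 2 ≤ n) (hπ : π.Nodup)
    (h : InImage n i π) : ImagePositions (π.idxOf 1) (π.idxOf 2) π.length i := by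
  obtain ⟨σ, hσ, -, rfl⟩ := h
  obtain ⟨A, B, hAB, hA⟩ := exists_map_succ_eq_append_two hn hσ
  fin_cases i <;>
    simp only [Fin.zero_eta, Fin.mk_one, Fin.reduceFinMk, Fin.isValue, Matrix.cons_val',
      Matrix.cons_val, Matrix.cons_val_fin_one, Matrix.cons_val_zero, Matrix.cons_val_one,
      ImagePositions] at hπ ⊢
  · rw [fBefore_eq_of_map_succ_eq hAB hA] at hπ ⊢
    grind
  · rw [fAfter_eq_of_map_succ_eq hAB hA] at hπ ⊢
    grind
  · rw [fEnd] at hπ ⊢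
    grind
  · rw [fBump] at hπ ⊢
    grind

theorem ImagePositions.end_of_ne {p₁ p₂ L : ℕ} {i j : Fin 4} (h₁ : p₁ < L) (h₂ : p₂ < L)
    (hp : p₁ ≠ p₂) (hij : i ≠ j) (hi : ImagePositions p₁ p₂ L i) (hj : ImagePositions p₁ p₂ L j) :
    (p₁ + 2 = L ∧ p₂ + 1 = L) ∨ (p₂ + 2 = L ∧ p₁ + 1 = L) := by
  fin_cases i <;> fin_cases j <;> simp [ImagePositions] at hi hj hij ⊢ <;> omega

theorem inImage_zero_and_three_of_eq_append {n : ℕ} {l : List ℕ} (hπ : IsPermOf (l ++ [1, 2]) n)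
    (hB : BAvoid (l ++ [1, 2])) : InImage n 0 (l ++ [1, 2]) ∧ InImage n 3 (l ++ [1, 2]) := by
  have hdisj := List.disjoint_of_nodup_append hπ.nodup
  have h2 : 2 ∉ l := fun h => hdisj h (by simp)
  obtain ⟨σ, hσ, hσB, hτ⟩ := exists_bAvoid_map_succ_eq_erase_one hπ hB
  rw [List.erase_append_right _ fun h => hdisj h (by simp)] at hτ
  exact ⟨⟨σ, hσ, hσB, fBefore_eq_of_map_succ_eq hτ h2⟩, ⟨σ, hσ, hσB, fBump_eq_of_map_succ_eq hτ h2⟩⟩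

theorem inImage_one_and_two_of_eq_append {n : ℕ} {l : List ℕ} (hπ : IsPermOf (l ++ [2, 1]) n)
    (hB : BAvoid (l ++ [2, 1])) : InImage n 1 (l ++ [2, 1]) ∧ InImage n 2 (l ++ [2, 1]) := by
  have hdisj := List.disjoint_of_nodup_append hπ.nodup
  have h2 : 2 ∉ l := fun h => hdisj h (by simp)
  obtain ⟨σ, hσ, hσB, hτ⟩ := exists_bAvoid_map_succ_eq_erase_one hπ hB
  rw [List.erase_append_right _ fun h => hdisj h (by simp)] at hτ
  refine ⟨⟨σ, hσ, hσB, ?_⟩, ⟨σ, hσ, hσB, ?_⟩⟩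
  · simpa using fAfter_eq_of_map_succ_eq (by simpa using hτ) h2
  · simp [fEnd, hτ]

theorem stmt10 (n : ℕ) (hn : 3 ≤ n) (π : List ℕ) (hπ : IsPermOf π n) (hB : BAvoid π) :
    ((∃ i j : Fin 4, i ≠ j ∧ InImage n i π ∧ InImage n j π) ↔
      ∃ l : List ℕ, π = l ++ [1, 2] ∨ π = l ++ [2, 1]) ∧
    ¬ (InImage n 0 π ∧ InImage n 1 π) ∧ ¬ (InImage n 2 π ∧ InImage n 3 π) := by
  have hpos (i : Fin 4) (h : InImage n i π) := h.imagePositions (by omega) hπ.nodup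
  have hp₁ : π.idxOf 1 < π.length := List.idxOf_lt_length_iff.2 (hπ.mem le_rfl (by omega))
  have hp₂ : π.idxOf 2 < π.length := List.idxOf_lt_length_iff.2 (hπ.mem (by omega) (by omega))
  have h12 : π.idxOf 1 ≠ π.idxOf 2 := by simp [List.idxOf_inj (hπ.mem le_rfl (by omega))]
  refine ⟨⟨fun ⟨i, j, hij, hi, hj⟩ => ?_, ?_⟩, fun ⟨h0, h1⟩ => ?_, fun ⟨h2, h3⟩ => ?_⟩
  · have hend : (π.idxOf 1 + 2 = π.length ∧ π.idxOf 2 + 1 = π.length) ∨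
        (π.idxOf 2 + 2 = π.length ∧ π.idxOf 1 + 1 = π.length) :=
      ImagePositions.end_of_ne hp₁ hp₂ h12 hij (hpos i hi) (hpos j hj)
    rcases hend with ⟨h1, h2⟩ | ⟨h2, h1⟩
    · obtain ⟨l, hl⟩ := List.exists_eq_append_pair_of_idxOf h1 h2
      exact ⟨l, .inl hl⟩
    · obtain ⟨l, hl⟩ := List.exists_eq_append_pair_of_idxOf h2 h1
      exact ⟨l, .inr hl⟩
  · rintro ⟨l, rfl | rfl⟩
    · obtain ⟨h0, h3⟩ := inImage_zero_and_three_of_eq_append hπ hB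
      exact ⟨0, 3, by decide, h0, h3⟩
    · obtain ⟨h1, h2⟩ := inImage_one_and_two_of_eq_append hπ hB
      exact ⟨1, 2, by decide, h1, h2⟩
  · have e₀ := hpos 0 h0
    have e₁ := hpos 1 h1
    simp [ImagePositions] at e₀ e₁
    omega
  · have e₂ := hpos 2 h2
    have e₃ := hpos 3 h3
    simp [ImagePositions] at e₂ e₃
    omega
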